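/- Assume (A1), (A2), (CFL) and let Ω be bounded. Let λ = λ_{h,Ω} be the first Dirichlet eigenvalue of −L_h on Ω with nonnegative eigenfunction φ normalized by h^N Σ_α φ(x_α) = 1. If u ≥ 0 solves the discrete reaction-diffusion scheme and I(0) := h^N Σ_{x_α∈Ω} u(x_α,0)φ(x_α) > λ^{1/(p−1)}, then u blows up in finite time (Σ_j τ_j < ∞). -/

import Mathlib

open Real Filter

/-- The discrete diffusion operator `L_h φ(x_α) = Σ_{β≠0} (φ(x_α + x_β) - φ(x_α)) ω(β)`. -/
noncomputable def discreteLh {N : ℕ} (ω : (Fin N → ℤ) → ℝ) (φ : (Fin N → ℤ) → ℝ)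
    (α : Fin N → ℤ) : ℝ :=
  ∑' β : Fin N → ℤ, (φ (α + β) - φ α) * ω β

/-!
Kaplan's eigenfunction method. By the self-adjointness of `L_h` and Jensen's inequality, the
weighted mass `I_j = hᴺ Σ_{α ∈ S} u_j(α) φ(α)` satisfies
`I_{j+1} ≥ I_j + τ_j (I_j^p - λ I_j)`. Starting above `λ^{1/(p-1)}`, `I_j` therefore grows at
least linearly in `Σ_{i<j} τ_i`. Since `I_j ≤ U_j = sup u_j` and `τ_j` stays bounded below while
`U_j` is bounded, `U_j` eventually exceeds any level. Once `U_j ≥ 1` and `U_j^{p-1} ≥ 2 Σ ω`, the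
step `τ_j = τ U_j^{1-p}` turns the reaction term into `τ U_j` and dominates the diffusion loss, so
`U_j` grows geometrically from then on and `τ_j` decays geometrically.
-/

open Finset

section DiscreteLh

variable {N : ℕ} {ω : (Fin N → ℤ) → ℝ}

lemma tsum_shift_mul_eq (v : (Fin N → ℤ) → ℝ) (α : Fin N → ℤ) :
    ∑' β, v (α + β) * ω β = ∑' γ, v γ * ω (γ - α) := by
  rw [← (Equiv.addLeft α).tsum_eq fun γ => v γ * ω (γ - α)]
  simp

lemma summable_mul_sub (hω : Summable ω) (hω0 : ∀ β, 0 ≤ ω β) {v : (Fin N → ℤ) → ℝ}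
    (hv : ∀ α, 0 ≤ v α) (hvb : BddAbove (Set.range v)) (α : Fin N → ℤ) :
    Summable fun γ => v γ * ω (γ - α) := by
  obtain ⟨M, hM⟩ := hvb
  refine Summable.of_nonneg_of_le (fun γ => mul_nonneg (hv γ) (hω0 _))
    (fun γ => mul_le_mul_of_nonneg_right (hM ⟨γ, rfl⟩) (hω0 _)) ?_
  exact (hω.comp_injective (sub_left_injective (b := α))).mul_left M

lemma discreteLh_eq_tsum_sub (hω : Summable ω) (hω0 : ∀ β, 0 ≤ ω β) {v : (Fin N → ℤ) → ℝ}
    (hv : ∀ α, 0 ≤ v α) (hvb : BddAbove (Set.range v)) (α : Fin N → ℤ) :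
    discreteLh ω v α = ∑' γ, v γ * ω (γ - α) - v α * ∑' β, ω β := by
  have hshift : Summable fun β => v (α + β) * ω β := by
    simpa [Function.comp_def] using
      (Equiv.addLeft α).summable_iff.2 (summable_mul_sub hω hω0 hv hvb α)
  rw [← tsum_shift_mul_eq, ← tsum_mul_left, ← Summable.tsum_sub hshift (hω.mul_left _)]
  simp only [discreteLh, sub_mul]

lemma neg_mul_tsum_le_discreteLh (hω : Summable ω) (hω0 : ∀ β, 0 ≤ ω β)
    {v : (Fin N → ℤ) → ℝ} (hv : ∀ α, 0 ≤ v α) (hvb : BddAbove (Set.range v))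
    (α : Fin N → ℤ) : -(v α * ∑' β, ω β) ≤ discreteLh ω v α := by
  rw [discreteLh_eq_tsum_sub hω hω0 hv hvb]
  have : 0 ≤ ∑' γ, v γ * ω (γ - α) := tsum_nonneg fun γ => mul_nonneg (hv γ) (hω0 _)
  linarith

lemma discreteLh_nonpos_of_forall_le (hω0 : ∀ β, 0 ≤ ω β) {v : (Fin N → ℤ) → ℝ}
    {α : Fin N → ℤ} (hmax : ∀ β, v β ≤ v α) : discreteLh ω v α ≤ 0 :=
  tsum_nonpos fun β => mul_nonpos_of_nonpos_of_nonneg (sub_nonpos.2 (hmax _)) (hω0 β)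

lemma bddAbove_range_of_eq_zero_off {v : (Fin N → ℤ) → ℝ} {S : Finset (Fin N → ℤ)}
    (hvS : ∀ α, α ∉ S → v α = 0) : BddAbove (Set.range v) := by
  refine ((S.finite_toSet.image v).insert 0).bddAbove.mono ?_
  rintro _ ⟨α, rfl⟩
  by_cases hα : α ∈ S
  · exact Or.inr ⟨α, hα, rfl⟩
  · exact Or.inl (hvS α hα)

/-- At a maximum point of `v`, which lies in `S`, `-L_h v ≥ 0`. -/
lemma eigenvalue_nonneg_of_nonneg_eigenfunction (hω0 : ∀ β, 0 ≤ ω β)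
    {S : Finset (Fin N → ℤ)} {v : (Fin N → ℤ) → ℝ} {lam : ℝ} (hv : ∀ α, 0 ≤ v α)
    (hvS : ∀ α, α ∉ S → v α = 0) (hv0 : v ≠ 0)
    (heig : ∀ α ∈ S, -discreteLh ω v α = lam * v α) : 0 ≤ lam := by
  obtain ⟨α₁, hα₁⟩ := Function.ne_iff.1 hv0
  have hα₁S : α₁ ∈ S := by_contra fun h => hα₁ (hvS α₁ h)
  obtain ⟨α₀, hα₀S, hmax⟩ := S.exists_max_image v ⟨α₁, hα₁S⟩
  have hpos : 0 < v α₀ := ((hv α₁).lt_of_ne' hα₁).trans_le (hmax α₁ hα₁S)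
  have hmax' : ∀ β, v β ≤ v α₀ := fun β => by
    by_cases hβ : β ∈ S
    · exact hmax β hβ
    · exact (hvS β hβ).trans_le hpos.le
  refine nonneg_of_mul_nonneg_left ?_ hpos
  rw [← heig α₀ hα₀S]
  exact neg_nonneg.2 (discreteLh_nonpos_of_forall_le hω0 hmax')

/-- Equality holds when `u` also vanishes outside `S`. -/
lemma sum_mul_discreteLh_le (hsym : ∀ α, ω (-α) = ω α) (hω : Summable ω)
    (hω0 : ∀ β, 0 ≤ ω β) {S : Finset (Fin N → ℤ)} {u φ : (Fin N → ℤ) → ℝ}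
    (hu : ∀ α, 0 ≤ u α) (hub : BddAbove (Set.range u)) (hφ : ∀ α, 0 ≤ φ α)
    (hφS : ∀ α, α ∉ S → φ α = 0) :
    ∑ α ∈ S, u α * discreteLh ω φ α ≤ ∑ α ∈ S, discreteLh ω u α * φ α := by
  have hφb := bddAbove_range_of_eq_zero_off hφS
  have hφsum : ∀ α, ∑' γ, φ γ * ω (γ - α) = ∑ γ ∈ S, φ γ * ω (γ - α) := fun α =>
    tsum_eq_sum fun γ hγ => by rw [hφS γ hγ, zero_mul]
  have hcross : ∑ α ∈ S, u α * ∑ γ ∈ S, φ γ * ω (γ - α) =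
      ∑ α ∈ S, (∑ γ ∈ S, u γ * ω (γ - α)) * φ α := by
    simp_rw [mul_sum, sum_mul]
    rw [sum_comm]
    refine sum_congr rfl fun α _ => sum_congr rfl fun γ _ => ?_
    rw [← hsym, neg_sub]
    ring
  have hpartial : ∀ α, ∑ γ ∈ S, u γ * ω (γ - α) ≤ ∑' γ, u γ * ω (γ - α) := fun α =>
    (summable_mul_sub hω hω0 hu hub α).sum_le_tsum _ fun γ _ => mul_nonneg (hu γ) (hω0 _)
  calc ∑ α ∈ S, u α * discreteLh ω φ α
      = ∑ α ∈ S, (u α * ∑ γ ∈ S, φ γ * ω (γ - α) - u α * (∑' β, ω β) * φ α) := by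
        refine sum_congr rfl fun α _ => ?_
        rw [discreteLh_eq_tsum_sub hω hω0 hφ hφb, hφsum]
        ring
    _ = ∑ α ∈ S, ((∑ γ ∈ S, u γ * ω (γ - α)) * φ α - u α * (∑' β, ω β) * φ α) := by
        rw [sum_sub_distrib, sum_sub_distrib, hcross]
    _ ≤ ∑ α ∈ S, discreteLh ω u α * φ α := by
        refine sum_le_sum fun α _ => ?_
        rw [discreteLh_eq_tsum_sub hω hω0 hu hub, sub_mul]
        gcongr
        · exact hφ α
        · exact hpartial α

end DiscreteLh

lemma map_iSup_le_of_monotoneOn {ι : Type*} [Nonempty ι] {f : ℝ → ℝ} {v : ι → ℝ}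
    (hf : ContinuousAt f (⨆ i, v i)) (hmono : MonotoneOn f (Set.range v))
    (hvb : BddAbove (Set.range v)) {b : ℝ} (hb : ∀ i, f (v i) ≤ b) : f (⨆ i, v i) ≤ b := by
  rw [iSup, hmono.map_csSup_of_continuousWithinAt hf.continuousWithinAt (Set.range_nonempty v) hvb]
  refine csSup_le ((Set.range_nonempty v).image f) ?_
  rintro _ ⟨_, ⟨i, rfl⟩, rfl⟩
  exact hb i

section Scheme

variable {N : ℕ} {ω : (Fin N → ℤ) → ℝ}

lemma mass_le_of_le {S : Finset (Fin N → ℤ)} {φ v : (Fin N → ℤ) → ℝ} {κ M : ℝ} (hκ : 0 ≤ κ)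
    (hφ : ∀ α, 0 ≤ φ α) (hnorm : κ * ∑ α ∈ S, φ α = 1) (hvM : ∀ α, v α ≤ M) :
    κ * ∑ α ∈ S, v α * φ α ≤ M :=
  calc κ * ∑ α ∈ S, v α * φ α ≤ κ * ∑ α ∈ S, M * φ α := by
        gcongr with α
        exacts [hφ α, hvM α]
    _ = M := by rw [← mul_sum, mul_left_comm, hnorm, mul_one]

lemma mass_add_mul_le_mass_step (hsym : ∀ α, ω (-α) = ω α) (hω : Summable ω)
    (hω0 : ∀ β, 0 ≤ ω β) {S : Finset (Fin N → ℤ)} {φ : (Fin N → ℤ) → ℝ} {lam κ : ℝ}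
    (hκ : 0 ≤ κ) (hφ : ∀ α, 0 ≤ φ α) (hφS : ∀ α, α ∉ S → φ α = 0)
    (hnorm : κ * ∑ α ∈ S, φ α = 1) (heig : ∀ α ∈ S, -discreteLh ω φ α = lam * φ α)
    {p t : ℝ} (hp : 1 ≤ p) (ht : 0 ≤ t) {v v' : (Fin N → ℤ) → ℝ} (hv : ∀ α, 0 ≤ v α)
    (hvb : BddAbove (Set.range v)) (hv' : ∀ α, v' α = v α + t * (discreteLh ω v α + v α ^ p)) :
    κ * ∑ α ∈ S, v α * φ α +
        t * ((κ * ∑ α ∈ S, v α * φ α) ^ p - lam * (κ * ∑ α ∈ S, v α * φ α)) ≤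
      κ * ∑ α ∈ S, v' α * φ α := by
  have hdiffusion : -(lam * ∑ α ∈ S, v α * φ α) ≤ ∑ α ∈ S, discreteLh ω v α * φ α := by
    refine le_of_eq_of_le ?_ (sum_mul_discreteLh_le hsym hω hω0 hv hvb hφ hφS)
    rw [mul_sum, ← sum_neg_distrib]
    refine sum_congr rfl fun α hα => ?_
    rw [← neg_neg (discreteLh ω φ α), heig α hα]
    ring
  have hjensen : (κ * ∑ α ∈ S, v α * φ α) ^ p ≤ κ * ∑ α ∈ S, v α ^ p * φ α := by
    have := Real.rpow_arith_mean_le_arith_mean_rpow S (fun α => κ * φ α) v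
      (fun α _ => mul_nonneg hκ (hφ α)) (by rw [← mul_sum, hnorm]) (fun α _ => hv α) hp
    have hmul : ∀ f : (Fin N → ℤ) → ℝ, κ * ∑ α ∈ S, f α * φ α = ∑ α ∈ S, κ * φ α * f α :=
      fun f => by rw [mul_sum]; exact sum_congr rfl fun α _ => by ring
    rwa [hmul, hmul]
  have hsplit : κ * ∑ α ∈ S, v' α * φ α = κ * ∑ α ∈ S, v α * φ α +
      t * (κ * ∑ α ∈ S, discreteLh ω v α * φ α + κ * ∑ α ∈ S, v α ^ p * φ α) := by
    simp only [hv', add_mul, mul_add, sum_add_distrib, mul_sum]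
    ring_nf
  have := mul_le_mul_of_nonneg_left (add_le_add (mul_le_mul_of_nonneg_left hdiffusion hκ)
    hjensen) ht
  rw [hsplit]
  linarith

lemma le_iSup_step (hω : Summable ω) (hω0 : ∀ β, 0 ≤ ω β) {p t : ℝ} (hp : 0 < p) (ht : 0 ≤ t)
    (htω : t * ∑' β, ω β ≤ 1) {v v' : (Fin N → ℤ) → ℝ} (hv : ∀ α, 0 ≤ v α)
    (hvb : BddAbove (Set.range v)) (hv'b : BddAbove (Set.range v'))
    (hv' : ∀ α, v' α = v α + t * (discreteLh ω v α + v α ^ p)) :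
    (1 - t * ∑' β, ω β) * (⨆ α, v α) + t * (⨆ α, v α) ^ p ≤ ⨆ α, v' α := by
  refine map_iSup_le_of_monotoneOn (f := fun x => (1 - t * ∑' β, ω β) * x + t * x ^ p)
    ?_ ?_ hvb fun α => ?_
  · exact ((continuous_const.mul continuous_id).add
      (continuous_const.mul (Real.continuous_rpow_const hp.le))).continuousAt
  · rintro _ ⟨a, rfl⟩ _ ⟨b, rfl⟩ hab
    have : 0 ≤ 1 - t * ∑' β, ω β := sub_nonneg.2 htω
    dsimp only
    gcongr
    exact hv a
  · calc (1 - t * ∑' β, ω β) * v α + t * v α ^ p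
        = v α + t * (-(v α * ∑' β, ω β) + v α ^ p) := by ring
      _ ≤ v' α := by
        rw [hv']
        gcongr
        exact neg_mul_tsum_le_discreteLh hω hω0 hv hvb α
      _ ≤ ⨆ α, v' α := le_ciSup hv'b α

end Scheme

section Blowup

variable {p τ W lam : ℝ} {τs U I : ℕ → ℝ}

lemma rpow_sub_mul_eq_mul {y : ℝ} (hy : 0 < y) :
    y ^ p - lam * y = y * (y ^ (p - 1) - lam) := by
  rw [Real.rpow_sub_one hy.ne']
  field_simp

lemma rpow_sub_mul_le_rpow_sub_mul {a x : ℝ} (hp : 1 ≤ p) (ha : 0 < a) (hax : a ≤ x)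
    (hlam : lam ≤ a ^ (p - 1)) : a ^ p - lam * a ≤ x ^ p - lam * x := by
  rw [rpow_sub_mul_eq_mul ha, rpow_sub_mul_eq_mul (ha.trans_le hax)]
  exact mul_le_mul hax (sub_le_sub_right (Real.rpow_le_rpow ha.le hax (by linarith)) _)
    (sub_nonneg.2 hlam) (ha.le.trans hax)

lemma add_mul_sum_le_of_rpow_step (hp : 1 ≤ p) (hτs0 : ∀ j, 0 ≤ τs j)
    (hI : ∀ j, I j + τs j * (I j ^ p - lam * I j) ≤ I (j + 1)) (hI0 : 0 < I 0)
    (hlam : lam ≤ I 0 ^ (p - 1)) (j : ℕ) :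
    I 0 + (I 0 ^ p - lam * I 0) * ∑ i ∈ range j, τs i ≤ I j := by
  have hc : 0 ≤ I 0 ^ p - lam * I 0 := by
    rw [rpow_sub_mul_eq_mul hI0]
    exact mul_nonneg hI0.le (sub_nonneg.2 hlam)
  induction j with
  | zero => simp
  | succ j ih =>
    have hIj : I 0 ≤ I j :=
      (le_add_of_nonneg_right (mul_nonneg hc (sum_nonneg fun i _ => hτs0 i))).trans ih
    have hreact := rpow_sub_mul_le_rpow_sub_mul hp hI0 hIj hlam
    rw [sum_range_succ, mul_add]
    nlinarith [hI j, mul_le_mul_of_nonneg_left hreact (hτs0 j)]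

lemma exists_le_of_rpow_step (hp : 1 < p) (hτ : 0 < τ) (hτs0 : ∀ j, 0 ≤ τs j)
    (hτs : ∀ j, τs j = τ * min 1 (U j ^ (1 - p))) (hIU : ∀ j, I j ≤ U j)
    (hI : ∀ j, I j + τs j * (I j ^ p - lam * I j) ≤ I (j + 1)) (hI0 : 0 < I 0)
    (hlam : lam < I 0 ^ (p - 1)) (M : ℝ) : ∃ j, M ≤ U j := by
  by_contra! hUM
  have hgrowth := add_mul_sum_le_of_rpow_step hp.le hτs0 hI hI0 hlam.le
  have hc : 0 < I 0 ^ p - lam * I 0 := by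
    rw [rpow_sub_mul_eq_mul hI0]
    exact mul_pos hI0 (sub_pos.2 hlam)
  have hUpos : ∀ j, 0 < U j := fun j =>
    hI0.trans_le (((le_add_of_nonneg_right (mul_nonneg hc.le
      (sum_nonneg fun i _ => hτs0 i))).trans (hgrowth j)).trans (hIU j))
  set δ := τ * min 1 (M ^ (1 - p))
  have hδ : 0 < δ := mul_pos hτ (lt_min one_pos (Real.rpow_pos_of_pos ((hUpos 0).trans (hUM 0)) _))
  have hτsδ : ∀ j, δ ≤ τs j := fun j => by
    rw [hτs]
    refine mul_le_mul_of_nonneg_left (min_le_min le_rfl ?_) hτ.le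
    exact Real.rpow_le_rpow_of_nonpos (hUpos j) (hUM j).le (by linarith)
  obtain ⟨j, hj⟩ := exists_nat_gt (M / ((I 0 ^ p - lam * I 0) * δ))
  rw [div_lt_iff₀ (mul_pos hc hδ)] at hj
  have hsum : (j : ℝ) * δ ≤ ∑ i ∈ range j, τs i := by
    simpa using card_nsmul_le_sum (range j) τs δ fun i _ => hτsδ i
  nlinarith [hgrowth j, hIU j, hUM j, mul_le_mul_of_nonneg_left hsum hc.le]

lemma mul_le_succ_of_one_le (hp : 1 < p) (hτ : 0 ≤ τ)
    (hτs : ∀ j, τs j = τ * min 1 (U j ^ (1 - p)))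
    (hU : ∀ j, (1 - τs j * W) * U j + τs j * U j ^ p ≤ U (j + 1)) {j : ℕ} (h1 : 1 ≤ U j)
    (hW : 2 * W ≤ U j ^ (p - 1)) : (1 + τ / 2) * U j ≤ U (j + 1) := by
  have hUpos : 0 < U j := one_pos.trans_le h1
  have hτs_eq : τs j = τ * U j ^ (1 - p) := by
    rw [hτs, min_eq_right (Real.rpow_le_one_of_one_le_of_nonpos h1 (by linarith))]
  have hreact : τs j * U j ^ p = τ * U j := by
    rw [hτs_eq, mul_assoc, ← Real.rpow_add hUpos]
    norm_num
  have hdiff : τs j * W ≤ τ / 2 := by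
    have hpow : 0 < U j ^ (p - 1) := Real.rpow_pos_of_pos hUpos _
    rw [hτs_eq, show 1 - p = -(p - 1) by ring, Real.rpow_neg hUpos.le, mul_assoc,
      inv_mul_eq_div]
    calc τ * (W / U j ^ (p - 1)) ≤ τ * (1 / 2) :=
          mul_le_mul_of_nonneg_left ((div_le_iff₀ hpow).2 (by linarith)) hτ
      _ = τ / 2 := by ring
  nlinarith [hU j, mul_le_mul_of_nonneg_right hdiff hUpos.le]

lemma mul_pow_le_of_mul_le_succ {r M : ℝ} {j₀ : ℕ} (hr : 1 ≤ r) (hM : 0 ≤ M)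
    (hgrow : ∀ j, M ≤ U j → r * U j ≤ U (j + 1)) (hj₀ : M ≤ U j₀) (k : ℕ) :
    M * r ^ k ≤ U (j₀ + k) := by
  induction k with
  | zero => simpa using hj₀
  | succ k ih =>
    have hMk : M ≤ M * r ^ k := le_mul_of_one_le_right hM (one_le_pow₀ hr)
    calc M * r ^ (k + 1) = r * (M * r ^ k) := by ring
      _ ≤ r * U (j₀ + k) := by gcongr
      _ ≤ U (j₀ + k + 1) := hgrow _ (hMk.trans ih)

lemma summable_of_mul_pow_le (hp : 1 < p) (hτ : 0 ≤ τ) (hτs0 : ∀ j, 0 ≤ τs j)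
    (hτs : ∀ j, τs j = τ * min 1 (U j ^ (1 - p))) {r M : ℝ} {j₀ : ℕ} (hr : 1 < r) (hM : 0 < M)
    (hlower : ∀ k, M * r ^ k ≤ U (j₀ + k)) : Summable τs := by
  refine (summable_nat_add_iff j₀).1 (Summable.of_nonneg_of_le (fun k => hτs0 _) (fun k => ?_)
    ((summable_geometric_of_lt_one (Real.rpow_nonneg (zero_le_one.trans hr.le) (1 - p))
      (Real.rpow_lt_one_of_one_lt_of_neg hr (by linarith))).mul_left (τ * M ^ (1 - p))))
  calc τs (k + j₀) ≤ τ * U (j₀ + k) ^ (1 - p) := by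
        rw [hτs, add_comm]
        exact mul_le_mul_of_nonneg_left (min_le_right _ _) hτ
    _ ≤ τ * (M * r ^ k) ^ (1 - p) := by
        refine mul_le_mul_of_nonneg_left ?_ hτ
        exact Real.rpow_le_rpow_of_nonpos (mul_pos hM (pow_pos (by linarith) k)) (hlower k)
          (by linarith)
    _ = τ * M ^ (1 - p) * (r ^ (1 - p)) ^ k := by
        rw [Real.mul_rpow hM.le (pow_nonneg (by linarith) k),
          ← Real.rpow_pow_comm (by linarith), mul_assoc]

lemma tendsto_atTop_of_mul_pow_le {r M : ℝ} {j₀ : ℕ} (hr : 1 < r) (hM : 0 < M)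
    (hlower : ∀ k, M * r ^ k ≤ U (j₀ + k)) : Tendsto U atTop atTop :=
  (tendsto_add_atTop_iff_nat j₀).1 <| tendsto_atTop_mono (fun k => by rw [add_comm]; exact hlower k)
    ((tendsto_pow_atTop_atTop_of_one_lt hr).const_mul_atTop hM)

theorem summable_and_tendsto_of_rpow_steps (hp : 1 < p) (hτ : 0 < τ) (hW : 0 ≤ W)
    (hτs0 : ∀ j, 0 ≤ τs j) (hτs : ∀ j, τs j = τ * min 1 (U j ^ (1 - p)))
    (hIU : ∀ j, I j ≤ U j) (hI : ∀ j, I j + τs j * (I j ^ p - lam * I j) ≤ I (j + 1))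
    (hU : ∀ j, (1 - τs j * W) * U j + τs j * U j ^ p ≤ U (j + 1)) (hI0 : 0 < I 0)
    (hlam : lam < I 0 ^ (p - 1)) : Summable τs ∧ Tendsto U atTop atTop := by
  set M := max 1 ((2 * W) ^ (1 / (p - 1)))
  have hM1 : 1 ≤ M := le_max_left _ _
  have hgrow : ∀ j, M ≤ U j → (1 + τ / 2) * U j ≤ U (j + 1) := fun j hj =>
    mul_le_succ_of_one_le hp hτ.le hτs hU (hM1.trans hj) <| calc
      2 * W = ((2 * W) ^ (1 / (p - 1))) ^ (p - 1) := by
        rw [← Real.rpow_mul (by positivity), one_div_mul_cancel (by linarith), Real.rpow_one]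
      _ ≤ U j ^ (p - 1) := by
        gcongr
        exact (le_max_right _ _).trans hj
  obtain ⟨j₀, hj₀⟩ := exists_le_of_rpow_step hp hτ hτs0 hτs hIU hI hI0 hlam M
  have hlower := mul_pow_le_of_mul_le_succ (by linarith) (by linarith) hgrow hj₀
  exact ⟨summable_of_mul_pow_le hp hτ.le hτs0 hτs (by linarith) (by linarith) hlower,
    tendsto_atTop_of_mul_pow_le (by linarith) (by linarith) hlower⟩

end Blowup

theorem stmt14_general (N : ℕ) (h p τ : ℝ) (hh : 0 < h) (hp : 1 < p) (hτ : 0 < τ)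
    (ω : (Fin N → ℤ) → ℝ)
    (hsym : ∀ α, ω (-α) = ω α) (hnonneg : ∀ α, 0 ≤ ω α)
    (hsum : Summable ω) (hpos : 0 < ∑' α, ω α)
    (hCFL : τ ≤ 1 / (4 * ∑' α, ω α))
    (S : Finset (Fin N → ℤ))
    (lam : ℝ) (φ : (Fin N → ℤ) → ℝ)
    (hφnn : ∀ α, 0 ≤ φ α) (hφ0 : ∀ α, α ∉ S → φ α = 0)
    (hφnorm : h ^ N * ∑ α ∈ S, φ α = 1)
    (hφeig : ∀ α ∈ S, -(discreteLh ω φ α) = lam * φ α)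
    (u : ℕ → (Fin N → ℤ) → ℝ) (hu : ∀ j α, 0 ≤ u j α)
    (hbdd : ∀ j, BddAbove (Set.range (u j)))
    (Un : ℕ → ℝ) (hUn : ∀ j, Un j = ⨆ α, u j α)
    (τs : ℕ → ℝ) (hτs : ∀ j, τs j = τ * min 1 (Un j ^ (1 - p)))
    (hscheme : ∀ j α, u (j + 1) α = u j α + τs j * (discreteLh ω (u j) α + u j α ^ p))
    (hI0 : lam ^ (1 / (p - 1)) < h ^ N * ∑ α ∈ S, u 0 α * φ α) :
    Summable τs ∧ Tendsto Un atTop atTop := by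
  have hκ : 0 ≤ h ^ N := pow_nonneg hh.le N
  have hUge : ∀ j α, u j α ≤ Un j := fun j α => hUn j ▸ le_ciSup (hbdd j) α
  have hτs0 : ∀ j, 0 ≤ τs j := fun j => by
    rw [hτs]
    exact mul_nonneg hτ.le (le_min zero_le_one (Real.rpow_nonneg ((hu j 0).trans (hUge j 0)) _))
  have hτsω : ∀ j, τs j * ∑' α, ω α ≤ 1 := fun j => by
    have hτsτ : τs j ≤ τ := hτs j ▸ mul_le_of_le_one_right hτ.le (min_le_left _ _)
    rw [le_div_iff₀ (by positivity)] at hCFL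
    nlinarith
  have hlam0 : 0 ≤ lam := eigenvalue_nonneg_of_nonneg_eigenfunction hnonneg hφnn hφ0
    (fun hφ => by simp [hφ] at hφnorm) hφeig
  have hmass0 : 0 < h ^ N * ∑ α ∈ S, u 0 α * φ α := (Real.rpow_nonneg hlam0 _).trans_lt hI0
  refine summable_and_tendsto_of_rpow_steps hp hτ hpos.le hτs0 hτs
    (fun j => mass_le_of_le hκ hφnn hφnorm (hUge j))
    (fun j => mass_add_mul_le_mass_step hsym hsum hnonneg hκ hφnn hφ0 hφnorm hφeig hp.le
      (hτs0 j) (hu j) (hbdd j) (hscheme j))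
    (fun j => ?_) hmass0 ?_
  · rw [hUn, hUn]
    exact le_iSup_step hsum hnonneg (by linarith) (hτs0 j) (hτsω j) (hu j) (hbdd j) (hbdd (j + 1))
      (hscheme j)
  · rwa [one_div, Real.rpow_inv_lt_iff_of_pos hlam0 hmass0.le (by linarith)] at hI0

/-- Kaplan's method: under (A1), (A2), (CFL), if `λ = λ_{h,Ω}` is the first Dirichlet
eigenvalue of `-L_h` on a bounded `Ω` with a nonnegative eigenfunction `φ` normalized in
`ℓ¹`, and the initial weighted mass satisfies
`hᴺ Σ_{x_α∈Ω} u(x_α,0) φ(x_α) > λ^{1/(p-1)}`, then `u` blows up in finite time. -/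
theorem stmt14 (N : ℕ) (h p τ : ℝ) (hh : 0 < h) (hp : 1 < p) (hτ : 0 < τ)
    (ω : (Fin N → ℤ) → ℝ)
    (hsym : ∀ α, ω (-α) = ω α) (hnonneg : ∀ α, 0 ≤ ω α) (hω0 : ω 0 = 0)
    (hsum : Summable ω) (hpos : 0 < ∑' α, ω α)
    (hA2 : ∀ i : Fin N, 0 < ω (Pi.single i 1))
    (hCFL : τ ≤ 1 / (4 * ∑' α, ω α))
    (Ω : Set (Fin N → ℝ)) (hΩb : Bornology.IsBounded Ω)
    (S : Finset (Fin N → ℤ)) (hSdef : ∀ α, α ∈ S ↔ (fun k => h * α k) ∈ Ω)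
    (hS : S.Nonempty)
    (lam : ℝ) (φ : (Fin N → ℤ) → ℝ)
    (hφnn : ∀ α, 0 ≤ φ α) (hφ0 : ∀ α, α ∉ S → φ α = 0)
    (hφnorm : h ^ N * ∑ α ∈ S, φ α = 1)
    (hφeig : ∀ α ∈ S, -(discreteLh ω φ α) = lam * φ α)
    (hleast : IsLeast {μ : ℝ | ∃ ψ : (Fin N → ℤ) → ℝ, ψ ≠ 0 ∧
        (∀ α, α ∉ S → ψ α = 0) ∧ ∀ α ∈ S, -(discreteLh ω ψ α) = μ * ψ α} lam)
    (u : ℕ → (Fin N → ℤ) → ℝ) (hu : ∀ j α, 0 ≤ u j α)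
    (hbdd : ∀ j, BddAbove (Set.range (u j)))
    (Un : ℕ → ℝ) (hUn : ∀ j, Un j = ⨆ α, u j α)
    (τs : ℕ → ℝ) (hτs : ∀ j, τs j = τ * min 1 (Un j ^ (1 - p)))
    (hscheme : ∀ j α, u (j + 1) α = u j α + τs j * (discreteLh ω (u j) α + u j α ^ p))
    (hI0 : lam ^ (1 / (p - 1)) < h ^ N * ∑ α ∈ S, u 0 α * φ α) :
    Summable τs ∧ Tendsto Un atTop atTop :=
  stmt14_general N h p τ hh hp hτ ω hsym hnonneg hsum hpos hCFL S lam φ hφnn hφ0 hφnorm hφeig u hu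
    hbdd Un hUn τs hτs hscheme hI0
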